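/- arXiv:2505.17981 — 5 statements merged into one kernel-verified Lean document; each statement's English description precedes it below -/
import Mathlib

section
/- Let H be a k-graph with minimum positive codegree δ⁺(H). Every vertex v ∈ V(H) with deg(v) ≥ 1 satisfies deg(v) ≥ C(δ⁺(H) + k − 2, k − 1), where C(·,·) is the binomial coefficient. -/
open Finset

variable {V : Type*} [Fintype V] [DecidableEq V]

/-- The degree of a vertex set `S` in a hypergraph `H`: the number of edges containing `S`. -/
def deg (H : Finset (Finset V)) (S : Finset V) : ℕ :=
  (H.filter fun e => S ⊆ e).card

/-- The minimum positive codegree of a `k`-uniform hypergraph `H`: the minimum of `deg S`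
over all `(k-1)`-sets `S` with `deg S ≥ 1`. -/
noncomputable def minPosCodeg (k : ℕ) (H : Finset (Finset V)) : ℕ :=
  sInf {d | ∃ S : Finset V, S.card = k - 1 ∧ 0 < deg H S ∧ deg H S = d}

lemma key : ∀ (n r d : ℕ), r + d ≤ n → ∀ L : Finset (Finset V), L.Nonempty →
    (∀ e ∈ L, e.card = r) →
    (∀ S : Finset V, S.card + 1 = r → (∃ e ∈ L, S ⊆ e) →
      d + 1 ≤ (L.filter fun e => S ⊆ e).card) →
    (d + r).choose r ≤ L.card := by
  intro n
  induction n with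
  | zero =>
    intro r d hrd L hL _ _
    obtain rfl : r = 0 := by omega
    obtain rfl : d = 0 := by omega
    simpa using Finset.card_pos.mpr hL
  | succ n ih =>
    intro r d hrd L hL hunif hcod
    match d, r with
    | 0, r => simpa using Finset.card_pos.mpr hL
    | d + 1, 0 => simpa using Finset.card_pos.mpr hL
    | d + 1, r + 1 =>
      obtain ⟨e₀, he₀⟩ := hL
      by_cases hsingle : ∀ e ∈ L, e = e₀
      · exfalso
        obtain ⟨S, hSe, hScard⟩ := Finset.exists_subset_card_eq
          (show r ≤ e₀.card by rw [hunif e₀ he₀]; omega)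
        have h1 := hcod S (by omega) ⟨e₀, he₀, hSe⟩
        have h2 : (L.filter fun e => S ⊆ e) ⊆ {e₀} := by
          intro e he
          simp only [mem_filter] at he
          simp [hsingle e he.1]
        have := Finset.card_le_card h2
        simp only [card_singleton] at this
        omega
      · push_neg at hsingle
        obtain ⟨e₁, he₁, hne⟩ := hsingle
        obtain ⟨u, hu⟩ : (e₀ \ e₁).Nonempty := by
          rw [Finset.sdiff_nonempty]
          intro hsub
          exact hne (Finset.eq_of_subset_of_card_le hsub
            (by rw [hunif e₀ he₀, hunif e₁ he₁]) ).symm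
        rw [Finset.mem_sdiff] at hu
        obtain ⟨hu₀, hu₁⟩ := hu
        set A := L.filter (fun e => u ∈ e) with hA
        set B := L.filter (fun e => u ∉ e) with hB
        have hcardL : A.card + B.card = L.card :=
          Finset.card_filter_add_card_filter_not _
        set L₁ := A.image (fun e => Finset.erase e u) with hL₁
        have hinjA : Set.InjOn (fun e => Finset.erase e u) A := by
          intro x hx y hy hxy
          simp only [hA, coe_filter, Set.mem_setOf_eq] at hx hy
          rw [← Finset.insert_erase hx.2, ← Finset.insert_erase hy.2]
          simp only at hxy
          rw [hxy]
        have hcardL₁ : L₁.card = A.card := Finset.card_image_of_injOn hinjA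
        -- bound on A via L₁
        have bound1 : (d + 1 + r).choose r ≤ A.card := by
          rw [← hcardL₁]
          apply ih r (d + 1) (by omega)
          · exact ⟨e₀.erase u, Finset.mem_image_of_mem _
              (by simp [hA, he₀, hu₀])⟩
          · intro f hf
            simp only [hL₁, mem_image, hA, mem_filter] at hf
            obtain ⟨e, ⟨heL, hue⟩, rfl⟩ := hf
            rw [Finset.card_erase_of_mem hue, hunif e heL]
            omega
          · intro S hScard hSe
            obtain ⟨f, hf, hSf⟩ := hSe
            simp only [hL₁, mem_image, hA, mem_filter] at hf
            obtain ⟨e, ⟨heL, hue⟩, rfl⟩ := hf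
            have huS : u ∉ S := fun h => (Finset.mem_erase.mp (hSf h)).1 rfl
            have hins : insert u S ⊆ e := by
              rw [Finset.insert_subset_iff]
              exact ⟨hue, hSf.trans (Finset.erase_subset _ _)⟩
            have h1 := hcod (insert u S)
              (by rw [Finset.card_insert_of_notMem huS]; omega) ⟨e, heL, hins⟩
            refine le_trans h1 ?_
            apply Finset.card_le_card_of_injOn (fun e => Finset.erase e u)
            · intro x hx
              simp only [mem_coe, mem_filter] at hx
              have hux : u ∈ x := hx.2 (Finset.mem_insert_self u S)
              simp only [mem_coe, mem_filter, hL₁, mem_image, hA, mem_filter]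
              refine ⟨⟨x, ⟨hx.1, hux⟩, rfl⟩, ?_⟩
              intro s hs
              exact Finset.mem_erase.mpr ⟨fun h => huS (h ▸ hs),
                hx.2 (Finset.mem_insert_of_mem hs)⟩
            · intro x hx y hy hxy
              simp only [coe_filter, Set.mem_setOf_eq] at hx hy
              have hux : u ∈ x := hx.2 (Finset.mem_insert_self u S)
              have huy : u ∈ y := hy.2 (Finset.mem_insert_self u S)
              rw [← Finset.insert_erase hux, ← Finset.insert_erase huy]
              simp only at hxy
              rw [hxy]
        -- bound on B
        have bound2 : (d + (r + 1)).choose (r + 1) ≤ B.card := by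
          apply ih (r + 1) d (by omega)
          · exact ⟨e₁, by simp [hB, he₁, hu₁]⟩
          · intro e he
            simp only [hB, mem_filter] at he
            exact hunif e he.1
          · intro S hScard hSe
            obtain ⟨f, hf, hSf⟩ := hSe
            simp only [hB, mem_filter] at hf
            have huS : u ∉ S := fun h => hf.2 (hSf h)
            have h1 := hcod S hScard ⟨f, hf.1, hSf⟩
            have h2 : (L.filter fun e => S ⊆ e) ⊆
                insert (insert u S) (B.filter fun e => S ⊆ e) := by
              intro e he
              simp only [mem_filter] at he
              by_cases hue : u ∈ e
              · have : insert u S ⊆ e := by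
                  rw [Finset.insert_subset_iff]; exact ⟨hue, he.2⟩
                have : e = insert u S := by
                  apply (Finset.eq_of_subset_of_card_le this _).symm
                  rw [Finset.card_insert_of_notMem huS, hunif e he.1]
                  omega
                simp [this]
              · exact Finset.mem_insert_of_mem (by simp [hB, mem_filter, he, hue])
            have h3 := Finset.card_le_card h2
            have h4 := Finset.card_insert_le (insert u S) (B.filter fun e => S ⊆ e)
            omega
        have pascal : (d + 1 + (r + 1)).choose (r + 1)
            = (d + 1 + r).choose r + (d + (r + 1)).choose (r + 1) := by
          have : d + 1 + (r + 1) = (d + 1 + r) + 1 := by ring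
          rw [this, Nat.choose_succ_succ']
          congr 2
          omega
        omega


theorem stmt1 (k : ℕ) (H : Finset (Finset V)) (hunif : ∀ e ∈ H, e.card = k)
    (v : V) (hv : 0 < deg H {v}) :
    (minPosCodeg k H + k - 2).choose (k - 1) ≤ deg H {v} := by
  obtain ⟨e, he⟩ := Finset.card_pos.mp hv
  rw [Finset.mem_filter, Finset.singleton_subset_iff] at he
  obtain ⟨heH, hve⟩ := he
  have hk : 1 ≤ k := by
    rw [← hunif e heH]
    exact Finset.card_pos.mpr ⟨v, hve⟩
  set δ := minPosCodeg k H with hδ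
  have hsetne : {d | ∃ S : Finset V, S.card = k - 1 ∧ 0 < deg H S ∧ deg H S = d}.Nonempty := by
    obtain ⟨S, hSe, hScard⟩ := Finset.exists_subset_card_eq
      (show k - 1 ≤ e.card by rw [hunif e heH]; omega)
    exact ⟨deg H S, S, hScard, Finset.card_pos.mpr
      ⟨e, Finset.mem_filter.mpr ⟨heH, hSe⟩⟩, rfl⟩
  have hδmem := Nat.sInf_mem hsetne
  obtain ⟨S₀, _, hS₀pos, hS₀eq⟩ := hδmem
  have hδpos : 1 ≤ δ := by rw [hδ, minPosCodeg, ← hS₀eq]; exact hS₀pos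
  have hmin : ∀ S : Finset V, S.card = k - 1 → 0 < deg H S → δ ≤ deg H S :=
    fun S h1 h2 => Nat.sInf_le ⟨S, h1, h2, rfl⟩
  set L := (H.filter fun e => v ∈ e).image (fun e => Finset.erase e v) with hL
  have hdegv : deg H {v} = (H.filter fun e => v ∈ e).card := by
    rw [deg]
    congr 1
    apply Finset.filter_congr
    intro e _
    simp [Finset.singleton_subset_iff]
  have hLcard : L.card ≤ deg H {v} := by
    rw [hdegv]
    exact Finset.card_image_le
  have hkey : (δ - 1 + (k - 1)).choose (k - 1) ≤ L.card := by
    apply key ((k - 1) + (δ - 1)) (k - 1) (δ - 1) le_rfl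
    · exact ⟨e.erase v, Finset.mem_image_of_mem _
        (Finset.mem_filter.mpr ⟨heH, hve⟩)⟩
    · intro f hf
      simp only [hL, mem_image, mem_filter] at hf
      obtain ⟨e', ⟨he'H, hve'⟩, rfl⟩ := hf
      rw [Finset.card_erase_of_mem hve', hunif e' he'H]
    · intro S hScard hSe
      obtain ⟨f, hf, hSf⟩ := hSe
      simp only [hL, mem_image, mem_filter] at hf
      obtain ⟨e', ⟨he'H, hve'⟩, rfl⟩ := hf
      have hvS : v ∉ S := fun h => (Finset.mem_erase.mp (hSf h)).1 rfl
      have hins : insert v S ⊆ e' := by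
        rw [Finset.insert_subset_iff]
        exact ⟨hve', hSf.trans (Finset.erase_subset _ _)⟩
      have hpos : 0 < deg H (insert v S) :=
        Finset.card_pos.mpr ⟨e', Finset.mem_filter.mpr ⟨he'H, hins⟩⟩
      have h1 := hmin (insert v S)
        (by rw [Finset.card_insert_of_notMem hvS]; omega) hpos
      have h2 : deg H (insert v S) ≤ (L.filter fun e => S ⊆ e).card := by
        rw [deg]
        apply Finset.card_le_card_of_injOn (fun e => Finset.erase e v)
        · intro x hx
          simp only [mem_coe, mem_filter] at hx
          have hvx : v ∈ x := hx.2 (Finset.mem_insert_self v S)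
          simp only [mem_coe, mem_filter, hL, mem_image, mem_filter]
          refine ⟨⟨x, ⟨hx.1, hvx⟩, rfl⟩, ?_⟩
          intro s hs
          exact Finset.mem_erase.mpr ⟨fun h => hvS (h ▸ hs),
            hx.2 (Finset.mem_insert_of_mem hs)⟩
        · intro x hx y hy hxy
          simp only [coe_filter, Set.mem_setOf_eq] at hx hy
          have hvx : v ∈ x := hx.2 (Finset.mem_insert_self v S)
          have hvy : v ∈ y := hy.2 (Finset.mem_insert_self v S)
          rw [← Finset.insert_erase hvx, ← Finset.insert_erase hvy]
          simp only at hxy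
          rw [hxy]
      omega
  have harith : δ - 1 + (k - 1) = δ + k - 2 := by omega
  rw [harith] at hkey
  omega
end

section
/- Let k ≥ 3, let n be divisible by k, and let A, B be disjoint vertex sets with |A| = n/k + 1 and |B| = n − |A|. Let H be the k-graph on A ∪ B whose edges are all k-sets e with |e ∩ A| ∈ {0,1}. Then the minimum positive codegree of H equals |B| − (k−2) = ((k−1)/k)·n − (k−1). -/
open Finset

variable {V : Type*} [Fintype V] [DecidableEq V]

lemma aux_deg (k : ℕ) (hk : 1 ≤ k) (A : Finset V)
    (S : Finset V) (hS : S.card = k - 1) :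
    deg ((univ.powersetCard k).filter fun e => (e ∩ A).card ≤ 1) S
      = ((univ \ S).filter fun v => ((insert v S) ∩ A).card ≤ 1).card := by
  unfold deg
  rw [filter_filter]
  symm
  refine Finset.card_bij (fun v _ => insert v S) ?_ ?_ ?_
  · intro v hv
    simp only [mem_filter, mem_sdiff, mem_univ, true_and] at hv
    simp only [mem_filter, mem_powersetCard]
    refine ⟨⟨subset_univ _, ?_⟩, hv.2, subset_insert _ _⟩
    rw [card_insert_of_notMem hv.1, hS]; omega
  · intro v hv w hw h
    simp only [mem_filter, mem_sdiff, mem_univ, true_and] at hv hw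
    have h' : insert v S = insert w S := h
    have : v ∈ insert w S := by rw [← h']; exact mem_insert_self v S
    rcases mem_insert.1 this with h'' | h''
    · exact h''
    · exact absurd h'' hv.1
  · intro e he
    simp only [mem_filter, mem_powersetCard] at he
    obtain ⟨⟨-, hcard⟩, hcond, hsub⟩ := he
    have h1 : (e \ S).card = 1 := by
      rw [card_sdiff_of_subset hsub, hcard, hS]; omega
    obtain ⟨v, hv⟩ := card_eq_one.1 h1
    have hvS : v ∉ S := by
      have : v ∈ e \ S := hv ▸ mem_singleton_self v
      exact (mem_sdiff.1 this).2
    have hins : insert v S = e := by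
      have he2 : e = S ∪ (e \ S) := by rw [union_sdiff_of_subset hsub]
      rw [he2, hv, union_comm, ← insert_eq]
    refine ⟨v, ?_, hins⟩
    simp only [mem_filter, mem_sdiff, mem_univ, true_and]
    exact ⟨hvS, by rw [hins]; exact hcond⟩

theorem stmt5 (k : ℕ) (hk : 3 ≤ k) (hn : k ∣ Fintype.card V)
    (A B : Finset V) (hdisj : Disjoint A B) (hcover : A ∪ B = univ)
    (hA : A.card = Fintype.card V / k + 1) (hB : B.card = Fintype.card V - A.card)
    (H : Finset (Finset V))
    (hH : H = (univ.powersetCard k).filter fun e => (e ∩ A).card ≤ 1) :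
    (minPosCodeg k H : ℝ) = (B.card : ℝ) - ((k : ℝ) - 2) ∧
    (B.card : ℝ) - ((k : ℝ) - 2) =
      ((k : ℝ) - 1) / k * (Fintype.card V) - ((k : ℝ) - 1) := by
  obtain ⟨m, hnm⟩ := hn
  have hk0 : 0 < k := by omega
  have hmdef : Fintype.card V / k = m := by
    rw [hnm]; exact Nat.mul_div_cancel_left m hk0
  rw [hmdef] at hA
  have hAn : A.card ≤ Fintype.card V := card_le_univ A
  have hm1 : 1 ≤ m := by
    by_contra h
    have hm0 : m = 0 := by omega
    rw [hm0, Nat.mul_zero] at hnm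
    omega
  -- B = Aᶜ
  have hBA : ∀ v : V, v ∈ B ↔ v ∉ A := by
    intro v
    constructor
    · intro hvB hvA
      exact (Finset.disjoint_left.1 hdisj) hvA hvB
    · intro hvA
      have : v ∈ A ∪ B := hcover ▸ mem_univ v
      rcases mem_union.1 this with h | h
      · exact absurd h hvA
      · exact h
  have hBcard : B.card = k * m - (m + 1) := by
    rw [hB, hA, hnm]
  have h3m : 3 * m ≤ k * m := Nat.mul_le_mul_right m hk
  -- (k-1)(m-1) ≥ 0 : k + m ≤ k*m + 1
  have hkm1 : k + m ≤ k * m + 1 := by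
    have hz : (k : ℤ) + (m : ℤ) ≤ (k : ℤ) * (m : ℤ) + 1 := by
      nlinarith [mul_nonneg (by linarith [show (3:ℤ) ≤ k by exact_mod_cast hk] : (0:ℤ) ≤ (k:ℤ) - 1)
        (by linarith [show (1:ℤ) ≤ m by exact_mod_cast hm1] : (0:ℤ) ≤ (m:ℤ) - 1)]
    exact_mod_cast hz
  have hkB : k - 2 ≤ B.card := by
    rw [hBcard]; omega
  -- degree computations
  have deg1 : ∀ S : Finset V, S.card = k - 1 → (S ∩ A).card = 1 →
      deg H S = B.card - (k - 2) := by
    intro S hS hSA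
    rw [hH, aux_deg k (by omega) A S hS]
    have hset : ((univ \ S).filter fun v => ((insert v S) ∩ A).card ≤ 1) = B \ S := by
      ext v
      simp only [mem_filter, mem_sdiff, mem_univ, true_and]
      constructor
      · rintro ⟨hvS, hle⟩
        refine ⟨(hBA v).2 fun hvA => ?_, hvS⟩
        rw [insert_inter_of_mem hvA, card_insert_of_notMem
          (fun h => hvS (mem_inter.1 h).1), hSA] at hle
        omega
      · rintro ⟨hvB, hvS⟩
        refine ⟨hvS, ?_⟩
        rw [insert_inter_of_notMem (fun h => (hBA v).1 hvB h), hSA]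
    rw [hset]
    have hSB : (S ∩ B).card = k - 2 := by
      have hd : (S ∩ A).card + (S \ A).card = S.card := card_inter_add_card_sdiff S A
      have hSA' : S \ A = S ∩ B := by
        ext v
        simp only [mem_sdiff, mem_inter]
        exact ⟨fun ⟨h1, h2⟩ => ⟨h1, (hBA v).2 h2⟩, fun ⟨h1, h2⟩ => ⟨h1, fun h => (hBA v).1 h2 h⟩⟩
      rw [hSA'] at hd
      omega
    have hBS : B \ S = B \ (S ∩ B) := by
      ext v; simp only [mem_sdiff, mem_inter]; tauto
    rw [hBS, card_sdiff_of_subset inter_subset_right, hSB]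
  have deg0 : ∀ S : Finset V, S.card = k - 1 → (S ∩ A).card = 0 →
      deg H S = Fintype.card V - (k - 1) := by
    intro S hS hSA
    rw [hH, aux_deg k (by omega) A S hS]
    have hset : ((univ \ S).filter fun v => ((insert v S) ∩ A).card ≤ 1) = univ \ S := by
      apply filter_true_of_mem
      intro v _
      have hsub : (insert v S) ∩ A ⊆ {v} := by
        intro w hw
        rcases mem_insert.1 (mem_inter.1 hw).1 with h | h
        · simp [h]
        · exfalso
          have hw2 : w ∈ S ∩ A := mem_inter.2 ⟨h, (mem_inter.1 hw).2⟩
          rw [card_eq_zero.1 hSA] at hw2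
          exact notMem_empty w hw2
      calc ((insert v S) ∩ A).card ≤ ({v} : Finset V).card := card_le_card hsub
        _ = 1 := card_singleton v
    rw [hset, card_sdiff_of_subset (subset_univ S), card_univ, hS]
  have deg2 : ∀ S : Finset V, S.card = k - 1 → 2 ≤ (S ∩ A).card →
      deg H S = 0 := by
    intro S hS hSA
    rw [hH, aux_deg k (by omega) A S hS]
    rw [card_eq_zero, filter_eq_empty_iff]
    intro v _
    have hsub : S ∩ A ⊆ (insert v S) ∩ A :=
      inter_subset_inter (subset_insert v S) (Subset.refl A)
    have := card_le_card hsub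
    omega
  -- the main natural-number computation
  have main : minPosCodeg k H = B.card - (k - 2) := by
    rcases eq_or_lt_of_le hm1 with hm2 | hm2
    · -- m = 1 : H is empty
      have hVk : Fintype.card V = k := by rw [hnm, ← hm2, Nat.mul_one]
      have hBc2 : B.card = k - 2 := by
        rw [hB, hA, hVk, ← hm2]
      have hHe : H = ∅ := by
        rw [hH, filter_eq_empty_iff]
        intro e he
        rw [mem_powersetCard] at he
        have heu : e = univ := eq_univ_of_card e (by rw [he.2, hVk])
        rw [heu]
        have : (univ : Finset V) ∩ A = A := by simp
        rw [this, hA, ← hm2]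
        omega
      have hdz : ∀ S : Finset V, deg H S = 0 := by
        intro S; simp [deg, hHe]
      have hsetE : {d | ∃ S : Finset V, S.card = k - 1 ∧ 0 < deg H S ∧ deg H S = d} = ∅ := by
        ext d
        simp only [Set.mem_setOf_eq, Set.mem_empty_iff_false, iff_false, not_exists]
        rintro S ⟨-, hpos, -⟩
        rw [hdz S] at hpos; omega
      unfold minPosCodeg
      rw [hsetE, Nat.sInf_empty, hBc2]
      omega
    · -- m ≥ 2
      have hkm : k + m ≤ k * m := by
        have hz : (k : ℤ) + (m : ℤ) ≤ (k : ℤ) * (m : ℤ) := by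
          nlinarith [mul_le_mul (by linarith [show (3:ℤ) ≤ k by exact_mod_cast hk] : (2:ℤ) ≤ (k:ℤ) - 1)
            (by linarith [show (2:ℤ) ≤ m by exact_mod_cast hm2] : (1:ℤ) ≤ (m:ℤ) - 1)
            (by linarith) (by linarith)]
        exact_mod_cast hz
      have hBk : k - 2 < B.card := by rw [hBcard]; omega
      obtain ⟨a, ha⟩ := card_pos.1 (show 0 < A.card by rw [hA]; omega)
      obtain ⟨T, hTB, hT⟩ := Finset.exists_subset_card_eq (show k - 2 ≤ B.card by omega)
      have haT : a ∉ T := fun h => (hBA a).1 (hTB h) ha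
      have hS₁c : (insert a T).card = k - 1 := by
        rw [card_insert_of_notMem haT, hT]; omega
      have hS₁A : ((insert a T) ∩ A).card = 1 := by
        have hTA : T ∩ A = ∅ := by
          rw [← Finset.disjoint_iff_inter_eq_empty]
          exact Finset.disjoint_left.2 fun v hv hvA => (hBA v).1 (hTB hv) hvA
        rw [insert_inter_of_mem ha, hTA, insert_empty_eq, card_singleton]
      have hdegS₁ : deg H (insert a T) = B.card - (k - 2) := deg1 _ hS₁c hS₁A
      have hpos : 0 < deg H (insert a T) := by rw [hdegS₁]; omega
      have hmem : B.card - (k - 2) ∈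
          {d | ∃ S : Finset V, S.card = k - 1 ∧ 0 < deg H S ∧ deg H S = d} :=
        ⟨insert a T, hS₁c, hpos, hdegS₁⟩
      unfold minPosCodeg
      apply le_antisymm
      · exact Nat.sInf_le hmem
      · have hne : {d | ∃ S : Finset V, S.card = k - 1 ∧ 0 < deg H S ∧ deg H S = d}.Nonempty :=
          ⟨_, hmem⟩
        obtain ⟨S, hSc, hSpos, hSd⟩ := Nat.sInf_mem hne
        rw [← hSd]
        rcases Nat.lt_or_ge (S ∩ A).card 2 with hlt | hge
        · interval_cases h : (S ∩ A).card
          · rw [deg0 S hSc h, hnm, hBcard]; omega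
          · rw [deg1 S hSc h]
        · rw [deg2 S hSc hge] at hSpos; omega
  constructor
  · rw [main, Nat.cast_sub hkB, Nat.cast_sub (by omega : 2 ≤ k)]
    norm_num
  · have hBr : (B.card : ℝ) = (Fintype.card V : ℝ) - ((m : ℝ) + 1) := by
      rw [hB, Nat.cast_sub hAn, hA]
      push_cast
      ring
    have hnr : (Fintype.card V : ℝ) = (k : ℝ) * (m : ℝ) := by exact_mod_cast hnm
    rw [hBr, hnr]
    have hk0' : (k : ℝ) ≠ 0 := by positivity
    field_simp
    ring
end

section
/- For every vector v ∈ ℝⁿ and every finite set X ⊆ ℝⁿ, either there exist nonnegative weights λ_x ≥ 0 for each x ∈ X such that Σ_{x∈X} λ_x·x = v, or there exists y ∈ ℝⁿ such that y·x ≤ 0 for every x ∈ X and y·v > 0. -/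
open Finset Matrix

private lemma farkas_aux (n : ℕ) : ∀ (m : ℕ) (X : Finset (Fin n → ℝ)), X.card ≤ m →
    ∀ (v : Fin n → ℝ),
    (∃ lam : (Fin n → ℝ) → ℝ, (∀ x ∈ X, 0 ≤ lam x) ∧ (∑ x ∈ X, lam x • x) = v) ∨
    (∃ y : Fin n → ℝ, (∀ x ∈ X, y ⬝ᵥ x ≤ 0) ∧ 0 < y ⬝ᵥ v) := by
  intro m
  induction m with
  | zero =>
    intro X hX v
    rw [Nat.le_zero, Finset.card_eq_zero] at hX
    subst hX
    by_cases hv : v = 0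
    · exact Or.inl ⟨0, by simp, by simp [hv]⟩
    · refine Or.inr ⟨v, by simp, ?_⟩
      have hnn : 0 ≤ v ⬝ᵥ v := Finset.sum_nonneg fun i _ => mul_self_nonneg _
      rcases lt_or_eq_of_le hnn with h | h
      · exact h
      · exact absurd (dotProduct_self_eq_zero.mp h.symm) hv
  | succ m IH =>
    intro X hX v
    rcases Finset.eq_empty_or_nonempty X with rfl | ⟨a, ha⟩
    · exact IH ∅ (by simp) v
    have hXa : X = insert a (X.erase a) := (Finset.insert_erase ha).symm
    have hcard : (X.erase a).card ≤ m := by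
      have := Finset.card_erase_of_mem ha
      omega
    have hanotin : a ∉ X.erase a := Finset.notMem_erase a X
    rcases IH (X.erase a) hcard v with ⟨lam, hlam0, hlams⟩ | ⟨y, hy, hyv⟩
    · -- v is already a nonneg combination of X.erase a
      refine Or.inl ⟨fun x => if x ∈ X.erase a then lam x else 0, ?_, ?_⟩
      · intro x hx
        by_cases h : x ∈ X.erase a
        · simpa [h] using hlam0 x h
        · simp [h]
      · rw [← Finset.sum_erase_add X _ ha]
        have h1 : (if a ∈ X.erase a then lam a else 0) = 0 := by simp [hanotin]
        simp only [h1, zero_smul, add_zero, ← hlams]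
        refine Finset.sum_congr rfl fun x hx => ?_
        simp [hx]
    · by_cases hya : y ⬝ᵥ a ≤ 0
      · refine Or.inr ⟨y, ?_, hyv⟩
        intro x hx
        rw [hXa] at hx
        rcases Finset.mem_insert.mp hx with rfl | h
        · exact hya
        · exact hy x h
      push_neg at hya
      have hya' : y ⬝ᵥ a ≠ 0 := ne_of_gt hya
      -- projection along a onto the hyperplane orthogonal to y
      set π : (Fin n → ℝ) → (Fin n → ℝ) := fun x => x - (y ⬝ᵥ x / y ⬝ᵥ a) • a with hπ
      have hπdot : ∀ (w x : Fin n → ℝ), w ⬝ᵥ π x = w ⬝ᵥ x - (y ⬝ᵥ x / y ⬝ᵥ a) * (w ⬝ᵥ a) := by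
        intro w x
        simp [hπ, dotProduct_sub, dotProduct_smul, smul_eq_mul]
      have hπrec : ∀ x : Fin n → ℝ, x = π x + (y ⬝ᵥ x / y ⬝ᵥ a) • a := by
        intro x; simp [hπ]
      set T : Finset (Fin n → ℝ) := (X.erase a).image π with hT
      have hTcard : T.card ≤ m := le_trans (Finset.card_image_le) hcard
      rcases IH T hTcard (π v) with ⟨μ, hμ0, hμs⟩ | ⟨y', hy', hy'v⟩
      · -- case: π v is a nonneg combination of T; lift back
        set g : (Fin n → ℝ) → (Fin n → ℝ) := Function.invFunOn π (X.erase a : Set _) with hg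
        have hgmem : ∀ z ∈ T, g z ∈ X.erase a := by
          intro z hz
          obtain ⟨x, hx, hxz⟩ := Finset.mem_image.mp hz
          exact Function.invFunOn_mem ⟨x, hx, hxz⟩
        have hgπ : ∀ z ∈ T, π (g z) = z := by
          intro z hz
          obtain ⟨x, hx, hxz⟩ := Finset.mem_image.mp hz
          exact Function.invFunOn_eq ⟨x, hx, hxz⟩
        set d : ℝ := ∑ z ∈ T, μ z * (y ⬝ᵥ g z / y ⬝ᵥ a) with hd
        have key : ∑ z ∈ T, μ z • g z = π v + d • a := by
          have : ∀ z ∈ T, μ z • g z = μ z • z + (μ z * (y ⬝ᵥ g z / y ⬝ᵥ a)) • a := by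
            intro z hz
            conv_lhs => rw [hπrec (g z)]
            rw [smul_add, hgπ z hz, smul_smul]
          rw [Finset.sum_congr rfl this, Finset.sum_add_distrib, hμs, ← Finset.sum_smul]
        have hd0 : d ≤ 0 := by
          apply Finset.sum_nonpos
          intro z hz
          have h1 : 0 ≤ μ z := hμ0 z hz
          have h2 : y ⬝ᵥ g z ≤ 0 := hy (g z) (hgmem z hz)
          have : y ⬝ᵥ g z / y ⬝ᵥ a ≤ 0 := div_nonpos_of_nonpos_of_nonneg h2 (le_of_lt hya)
          exact mul_nonpos_of_nonneg_of_nonpos h1 this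
        set c : ℝ := y ⬝ᵥ v / y ⬝ᵥ a - d with hc
        have hc0 : 0 ≤ c := by
          have h2 : 0 < y ⬝ᵥ v / y ⬝ᵥ a := div_pos hyv hya
          rw [hc]
          linarith
        have hveq : v = ∑ z ∈ T, μ z • g z + c • a := by
          rw [key, hc, sub_smul]
          conv_lhs => rw [hπrec v]
          abel
        -- rewrite the sum over T as a sum over S := T.image g
        set S : Finset (Fin n → ℝ) := T.image g with hS
        have hginj : Set.InjOn g T := by
          intro z1 h1 z2 h2 he
          rw [← hgπ z1 h1, ← hgπ z2 h2, he]
        have hsum2 : ∑ x ∈ S, μ (π x) • x = ∑ z ∈ T, μ z • g z := by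
          rw [hS, Finset.sum_image hginj]
          exact Finset.sum_congr rfl fun z hz => by rw [hgπ z hz]
        have hSsub : S ⊆ X.erase a := by
          intro x hx
          obtain ⟨z, hz, hzx⟩ := Finset.mem_image.mp hx
          exact hzx ▸ hgmem z hz
        have haS : a ∉ S := fun h => hanotin (hSsub h)
        refine Or.inl ⟨fun x => if x = a then c else if x ∈ S then μ (π x) else 0, ?_, ?_⟩
        · intro x hx
          by_cases h1 : x = a
          · simp [h1, hc0]
          by_cases h2 : x ∈ S
          · obtain ⟨z, hz, hzx⟩ := Finset.mem_image.mp h2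
            have : π x = z := by rw [← hzx, hgπ z hz]
            simp only [if_neg h1, if_pos h2, this]
            exact hμ0 z hz
          · simp [h1, h2]
        · rw [← Finset.sum_erase_add X _ ha]
          have e1 : ∑ x ∈ X.erase a, (if x = a then c else if x ∈ S then μ (π x) else 0) • x
              = ∑ x ∈ S, μ (π x) • x := by
            rw [← Finset.sum_subset hSsub]
            · refine Finset.sum_congr rfl fun x hx => ?_
              have hxa : x ≠ a := fun h => haS (h ▸ hx)
              simp [hxa, hx]
            · intro x hx hxS
              have hxa : x ≠ a := fun h => hanotin (h ▸ hx)
              simp [hxa, hxS]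
          have h2 : (if a = a then c else if a ∈ S then μ (π a) else 0) = c := by simp
          rw [e1, hsum2]
          beta_reduce
          rw [h2, hveq]
      · -- case: separating hyperplane for T; combine
        set w : Fin n → ℝ := y' - (y' ⬝ᵥ a / y ⬝ᵥ a) • y with hw
        have hwdot : ∀ x : Fin n → ℝ, w ⬝ᵥ x = y' ⬝ᵥ x - (y' ⬝ᵥ a / y ⬝ᵥ a) * (y ⬝ᵥ x) := by
          intro x
          simp [hw, sub_dotProduct, smul_dotProduct, smul_eq_mul]
        have hwπ : ∀ x : Fin n → ℝ, w ⬝ᵥ x = y' ⬝ᵥ π x := by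
          intro x
          rw [hwdot, hπdot]
          field_simp
        refine Or.inr ⟨w, ?_, ?_⟩
        · intro x hx
          rw [hXa] at hx
          rcases Finset.mem_insert.mp hx with rfl | h
          · rw [hwdot]
            field_simp
            simp
          · rw [hwπ]
            exact hy' (π x) (Finset.mem_image_of_mem π h)
        · rw [hwπ]
          exact hy'v

open Finset

/-- Farkas' lemma: for `v ∈ ℝⁿ` and a finite set `X ⊆ ℝⁿ`, either `v` is a nonnegative
combination of the elements of `X`, or there is `y` with `y ⬝ x ≤ 0` for all `x ∈ X`
and `y ⬝ v > 0`. -/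
theorem stmt11 (n : ℕ) (v : Fin n → ℝ) (X : Finset (Fin n → ℝ)) :
    (∃ lam : (Fin n → ℝ) → ℝ, (∀ x ∈ X, 0 ≤ lam x) ∧ (∑ x ∈ X, lam x • x) = v) ∨
    (∃ y : Fin n → ℝ, (∀ x ∈ X, ∑ i, y i * x i ≤ 0) ∧ 0 < ∑ i, y i * v i) := by
  exact farkas_aux n X.card X le_rfl v
end

section
/- Let H be a k-uniform hypergraph and let w be a perfect fractional matching of H that minimises M = max_{u,v} w_{uv} over all perfect fractional matchings of H. Let B be the set of pairs {u,v} with w_{uv} = M, and let H′ be obtained from H by deleting all edges containing a pair from B. Then H′ admits no perfect fractional matching. -/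
open Finset

variable {V : Type*} [Fintype V] [DecidableEq V]

/-- `w` is a fractional matching of `H`: nonnegative weights supported on edges,
with total weight at most 1 at each vertex. -/
def IsFracMatching (H : Finset (Finset V)) (w : Finset V → ℝ) : Prop :=
  (∀ e, 0 ≤ w e) ∧ (∀ e ∉ H, w e = 0) ∧
    ∀ v : V, (∑ e ∈ H.filter fun e => v ∈ e, w e) ≤ 1

/-- `w` is a perfect fractional matching of `H`: nonnegative weights supported on edges,
with total weight exactly 1 at each vertex. -/
def IsPerfFracMatching (H : Finset (Finset V)) (w : Finset V → ℝ) : Prop :=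
  (∀ e, 0 ≤ w e) ∧ (∀ e ∉ H, w e = 0) ∧
    ∀ v : V, (∑ e ∈ H.filter fun e => v ∈ e, w e) = 1

/-- The total weight of edges containing both `u` and `v`. -/
def pairWeight (H : Finset (Finset V)) (w : Finset V → ℝ) (u v : V) : ℝ :=
  ∑ e ∈ H.filter fun e => u ∈ e ∧ v ∈ e, w e

open scoped Classical in
theorem stmt16 (k : ℕ) (H : Finset (Finset V)) (hunif : ∀ e ∈ H, e.card = k)
    (w : Finset V → ℝ) (hw : IsPerfFracMatching H w) (M : ℝ) (hM : 0 < M)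
    (hmax : ∀ u v : V, u ≠ v → pairWeight H w u v ≤ M)
    (hach : ∃ u v : V, u ≠ v ∧ pairWeight H w u v = M)
    (hmin : ∀ w' : Finset V → ℝ, IsPerfFracMatching H w' →
      ∃ u v : V, u ≠ v ∧ M ≤ pairWeight H w' u v) :
    ¬ ∃ w' : Finset V → ℝ,
        IsPerfFracMatching
          (H.filter fun e => ∀ u ∈ e, ∀ v ∈ e, u ≠ v → pairWeight H w u v < M) w' := by

  rintro ⟨w', hw'⟩
  set H' := H.filter (fun e => ∀ u ∈ e, ∀ v ∈ e, u ≠ v → pairWeight H w u v < M) with hH'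
  obtain ⟨hw0, hwsupp, hwsum⟩ := hw
  obtain ⟨hw'0, hw'supp, hw'sum⟩ := hw'
  have hsupp' : ∀ e, e ∉ H' → w' e = 0 := hw'supp
  have hsum' : ∀ v : V, (∑ e ∈ H.filter fun e => v ∈ e, w' e) = 1 := by
    intro v
    rw [← hw'sum v]
    apply (Finset.sum_subset ?_ ?_).symm
    · exact Finset.filter_subset_filter _ (Finset.filter_subset _ _)
    · intro e he hne
      apply hsupp'
      intro heH'
      exact hne (Finset.mem_filter.2 ⟨heH', (Finset.mem_filter.1 he).2⟩)
  set P : Finset (V × V) :=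
    Finset.univ.filter (fun p => p.1 ≠ p.2 ∧ pairWeight H w p.1 p.2 < M) with hP
  set m : ℝ := (insert 0 (P.image fun p => pairWeight H w p.1 p.2)).max'
      (Finset.insert_nonempty _ _) with hm
  have hm0 : (0:ℝ) ≤ m := Finset.le_max' _ 0 (Finset.mem_insert_self _ _)
  have hmM : m < M := by
    have hmem := Finset.max'_mem (insert 0 (P.image fun p => pairWeight H w p.1 p.2))
      (Finset.insert_nonempty _ _)
    rw [← hm] at hmem
    rcases Finset.mem_insert.1 hmem with h | h
    · rw [h]; exact hM
    · obtain ⟨p, hp, hpe⟩ := Finset.mem_image.1 h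
      have := (Finset.mem_filter.1 hp).2.2
      rw [hpe] at this; exact this
  set t : ℝ := min (1/2) ((M - m)/2) with ht
  have ht0 : 0 < t := lt_min (by norm_num) (by linarith)
  have ht1 : t < 1 := lt_of_le_of_lt (min_le_left _ _) (by norm_num)
  have htm : t ≤ (M - m)/2 := min_le_right _ _
  set w2 : Finset V → ℝ := fun e => (1 - t) * w e + t * w' e with hw2
  have hw2pfm : IsPerfFracMatching H w2 := by
    refine ⟨fun e => ?_, fun e he => ?_, fun v => ?_⟩
    · have h1 := hw0 e; have h2 := hw'0 e
      have : (0:ℝ) ≤ 1 - t := by linarith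
      positivity
    · have h1 := hwsupp e he
      have h2 : w' e = 0 := hsupp' e (fun h => he (Finset.filter_subset _ _ h))
      simp [hw2, h1, h2]
    · simp only [hw2, Finset.sum_add_distrib, ← Finset.mul_sum, hwsum v, hsum' v]
      ring
  have hlin : ∀ u v : V, pairWeight H w2 u v
      = (1 - t) * pairWeight H w u v + t * pairWeight H w' u v := by
    intro u v
    simp only [pairWeight, hw2, Finset.sum_add_distrib, Finset.mul_sum]
  have hpw'le : ∀ u v : V, pairWeight H w' u v ≤ 1 := by
    intro u v
    calc pairWeight H w' u v ≤ ∑ e ∈ H.filter fun e => u ∈ e, w' e := by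
          apply Finset.sum_le_sum_of_subset_of_nonneg
          · exact Finset.monotone_filter_right _ (fun e _ he => he.1)
          · intro e _ _; exact hw'0 e
      _ = 1 := hsum' u
  have hpw0 : ∀ u v : V, 0 ≤ pairWeight H w u v := fun u v =>
    Finset.sum_nonneg (fun e _ => hw0 e)
  obtain ⟨u, v, huv, hMle⟩ := hmin w2 hw2pfm
  rw [hlin u v] at hMle
  by_cases hcase : pairWeight H w u v = M
  · have hzero : pairWeight H w' u v = 0 := by
      apply Finset.sum_eq_zero
      intro e he
      obtain ⟨heH, hue, hve⟩ := Finset.mem_filter.1 he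
      apply hsupp'
      intro heH'
      have := (Finset.mem_filter.1 heH').2 u hue v hve huv
      rw [hcase] at this
      exact lt_irrefl _ this
    rw [hcase, hzero] at hMle
    nlinarith
  · have hlt : pairWeight H w u v < M := lt_of_le_of_ne (hmax u v huv) hcase
    have hmem : pairWeight H w u v ≤ m := by
      apply Finset.le_max'
      exact Finset.mem_insert_of_mem (Finset.mem_image.2
        ⟨(u,v), Finset.mem_filter.2 ⟨Finset.mem_univ _, huv, hlt⟩, rfl⟩)
    have hb := hpw'le u v
    have ha := hpw0 u v
    nlinarith [mul_nonneg ht0.le ha, mul_le_of_le_one_right ht0.le hb]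
end

section
/- Let H be a k-uniform hypergraph and let v be a vertex of H with deg(v) ≥ 1. Then v can be extended to an edge one vertex at a time: there exist vertices u_1, …, u_{k−1} such that {v, u_1, …, u_i} has positive degree for every i ∈ [k−1] and {v, u_1, …, u_{k−1}} is an edge of H; moreover the number of such ordered sequences (u_1, …, u_{k−1}) is at least (δ⁺(H)+k−2)!/(δ⁺(H)−1)!. -/
open Finset

variable {V : Type*} [Fintype V] [DecidableEq V]

lemma degPos_iff {H : Finset (Finset V)} {S : Finset V} :
    0 < deg H S ↔ ∃ e ∈ H, S ⊆ e := by
  simp [deg, Finset.card_pos, Finset.filter_nonempty_iff]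

lemma fact_mul_prod (d n : ℕ) :
    d.factorial * ∏ j ∈ Finset.range n, (d + 1 + j) = (d + n).factorial := by
  induction n with
  | zero => simp
  | succ n ih =>
      rw [Finset.prod_range_succ, ← mul_assoc, ih,
        show d + (n + 1) = (d + n) + 1 by ring, Nat.factorial_succ]
      ring

lemma image_cons_le_succ {m : ℕ} (u : V) (w : Fin m → V) (i : Fin m) :
    ((univ.filter fun j : Fin (m + 1) => j ≤ i.succ).image (Fin.cons u w)) =
      insert u ((univ.filter fun j => j ≤ i).image w) := by
  ext x
  simp only [mem_image, mem_insert, mem_filter, mem_univ, true_and]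
  constructor
  · rintro ⟨j, hj, rfl⟩
    cases j using Fin.cases with
    | zero => exact Or.inl (by simp)
    | succ j' =>
        exact Or.inr ⟨j', by rwa [Fin.succ_le_succ_iff] at hj, by simp⟩
  · rintro (h | ⟨j, hj, rfl⟩)
    · exact ⟨0, Fin.zero_le _, by simp [h]⟩
    · exact ⟨j.succ, by rwa [Fin.succ_le_succ_iff], by simp⟩

lemma image_cons_univ {m : ℕ} (u : V) (w : Fin m → V) :
    ((univ : Finset (Fin (m + 1))).image (Fin.cons u w)) = insert u (univ.image w) := by
  ext x
  simp only [mem_image, mem_insert, mem_univ, true_and]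
  constructor
  · rintro ⟨j, rfl⟩
    cases j using Fin.cases with
    | zero => exact Or.inl (by simp)
    | succ j' => exact Or.inr ⟨j', by simp⟩
  · rintro (h | ⟨j, rfl⟩)
    · exact ⟨0, by simp [h]⟩
    · exact ⟨j.succ, by simp⟩

lemma image_cons_le_zero {m : ℕ} (u : V) (w : Fin m → V) :
    ((univ.filter fun j : Fin (m + 1) => j ≤ 0).image (Fin.cons u w)) = {u} := by
  ext x
  simp only [mem_image, mem_filter, mem_univ, true_and, mem_singleton, Fin.le_zero_iff]
  constructor
  · rintro ⟨j, rfl, rfl⟩; simp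
  · intro h; exact ⟨0, rfl, by simp [h]⟩

open scoped Classical in
/-- Extension lemma: a set of positive degree with fewer than `k` vertices has at least
`δ⁺ + (k - 1 - |S|)` extensions by one vertex to a set of positive degree. -/
lemma extA {k : ℕ} {H : Finset (Finset V)} (hunif : ∀ e ∈ H, e.card = k)
    {S : Finset V} (hS : 0 < deg H S) (hcard : S.card < k) :
    minPosCodeg k H + (k - 1 - S.card) ≤
      ((univ : Finset V).filter fun u => u ∉ S ∧ 0 < deg H (insert u S)).card := by
  obtain ⟨e, he, hSe⟩ := degPos_iff.mp hS
  have hek : e.card = k := hunif e he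
  obtain ⟨T, hST, hTe, hTcard⟩ :=
    exists_subsuperset_card_eq hSe (by omega) (by omega) (n := k - 1)
  have hTpos : 0 < deg H T := degPos_iff.mpr ⟨e, he, hTe⟩
  have hδ : minPosCodeg k H ≤ deg H T := Nat.sInf_le ⟨T, hTcard, hTpos, rfl⟩
  set B := H.filter fun e' => T ⊆ e' with hB
  -- every edge containing T has exactly one extra vertex
  have hone : ∀ e' ∈ B, ∃ u, e' \ T = {u} := by
    intro e' he'
    rw [hB, mem_filter] at he'
    apply Finset.card_eq_one.mp
    rw [card_sdiff_of_subset he'.2, hunif e' he'.1, hTcard]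
    omega
  have hvV : V := by
    have : e.Nonempty := Finset.card_pos.mp (by omega)
    exact this.choose
  set f : Finset V → V := fun e' => if h : ∃ u, e' \ T = {u} then h.choose else hvV with hf
  have hfspec : ∀ e' ∈ B, e' \ T = {f e'} := by
    intro e' he'
    rw [hf]; simp only [hone e' he', dif_pos]
    exact (hone e' he').choose_spec
  set A1 := T \ S with hA1
  set A2 := B.image f with hA2
  have hA2card : A2.card = B.card := by
    apply Finset.card_image_of_injOn
    intro e1 h1 e2 h2 hfe
    have h1' := mem_filter.mp h1
    have h2' := mem_filter.mp h2
    have e1eq : e1 = T ∪ (e1 \ T) := (Finset.union_sdiff_of_subset h1'.2).symm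
    have e2eq : e2 = T ∪ (e2 \ T) := (Finset.union_sdiff_of_subset h2'.2).symm
    rw [e1eq, e2eq, hfspec e1 h1, hfspec e2 h2, hfe]
  have hdisj : Disjoint A1 A2 := by
    rw [Finset.disjoint_left]
    intro u hu1 hu2
    rw [hA2, mem_image] at hu2
    obtain ⟨e', he', rfl⟩ := hu2
    have : f e' ∈ e' \ T := by rw [hfspec e' he']; exact mem_singleton_self _
    exact (mem_sdiff.mp this).2 (mem_sdiff.mp (hA1 ▸ hu1)).1
  have hsub : A1 ∪ A2 ⊆ (univ : Finset V).filter fun u => u ∉ S ∧ 0 < deg H (insert u S) := by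
    intro u hu
    rw [mem_union] at hu
    rw [mem_filter]
    refine ⟨mem_univ _, ?_⟩
    rcases hu with hu | hu
    · rw [hA1, mem_sdiff] at hu
      exact ⟨hu.2, degPos_iff.mpr ⟨e, he, insert_subset (hTe hu.1) hSe⟩⟩
    · rw [hA2, mem_image] at hu
      obtain ⟨e', he', rfl⟩ := hu
      have h1 := mem_filter.mp he'
      have hmem : f e' ∈ e' \ T := by rw [hfspec e' he']; exact mem_singleton_self _
      rw [mem_sdiff] at hmem
      refine ⟨fun hc => hmem.2 (hST hc), ?_⟩
      exact degPos_iff.mpr ⟨e', h1.1, insert_subset hmem.1 (hST.trans h1.2)⟩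
  have hBdeg : B.card = deg H T := rfl
  calc minPosCodeg k H + (k - 1 - S.card)
      ≤ B.card + A1.card := by
        have : A1.card = k - 1 - S.card := by
          rw [hA1, card_sdiff_of_subset hST, hTcard]
        omega
    _ = A1.card + A2.card := by rw [hA2card]; omega
    _ = (A1 ∪ A2).card := (Finset.card_union_of_disjoint hdisj).symm
    _ ≤ _ := Finset.card_le_card hsub

open scoped Classical in
lemma extB {k : ℕ} {H : Finset (Finset V)} (hunif : ∀ e ∈ H, e.card = k) :
    ∀ (m : ℕ) (S : Finset V), S.card + m = k → 0 < deg H S →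
    (∏ j ∈ Finset.range m, (minPosCodeg k H + j)) ≤
      ((univ : Finset (Fin m → V)).filter fun w =>
        (∀ i : Fin m, 0 < deg H (S ∪ ((univ.filter fun j => j ≤ i).image w))) ∧
        S ∪ univ.image w ∈ H).card := by
  intro m
  induction m with
  | zero =>
      intro S hcard hpos
      obtain ⟨e, he, hSe⟩ := degPos_iff.mp hpos
      have : S = e := Finset.eq_of_subset_of_card_le hSe (by rw [hunif e he]; omega)
      subst this
      simp only [Finset.range_zero, Finset.prod_empty]
      rw [Nat.one_le_iff_ne_zero, ← Nat.pos_iff_ne_zero, Finset.card_pos]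
      refine ⟨fun i => i.elim0, ?_⟩
      rw [mem_filter]
      refine ⟨mem_univ _, fun i => i.elim0, ?_⟩
      simpa using he
  | succ m ih =>
      intro S hcard hpos
      set δ := minPosCodeg k H with hδdef
      set C := (univ : Finset V).filter fun u => u ∉ S ∧ 0 < deg H (insert u S) with hC
      have hCcard : δ + m ≤ C.card := by
        have hext := extA hunif hpos (show S.card < k by omega)
        rw [← hC] at hext
        have hm : k - 1 - S.card = m := by omega
        omega
      set G := ((univ : Finset (Fin (m + 1) → V)).filter fun w =>
        (∀ i : Fin (m + 1), 0 < deg H (S ∪ ((univ.filter fun j => j ≤ i).image w))) ∧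
        S ∪ univ.image w ∈ H) with hG
      have key1 : ∀ u ∈ C, (∏ j ∈ Finset.range m, (δ + j)) ≤
          (G.filter fun f => f 0 = u).card := by
        intro u hu
        rw [hC, mem_filter] at hu
        obtain ⟨_, hunS, hupos⟩ := hu
        have hicard : (insert u S).card + m = k := by
          rw [Finset.card_insert_of_notMem hunS]; omega
        refine le_trans (ih (insert u S) hicard hupos) ?_
        apply Finset.card_le_card_of_injOn
          (fun w : Fin m → V => (Fin.cons u w : Fin (m + 1) → V))
        · intro w hw
          rw [mem_coe, mem_filter] at hw
          rw [mem_coe, mem_filter]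
          obtain ⟨-, hwpre, hwedge⟩ := hw
          refine ⟨?_, by simp⟩
          rw [hG, mem_filter]
          refine ⟨mem_univ _, ?_, ?_⟩
          · intro i
            cases i using Fin.cases with
            | zero =>
                rw [image_cons_le_zero]
                have : S ∪ {u} = insert u S := by
                  rw [Finset.union_comm, ← Finset.insert_eq]
                rw [this]; exact hupos
            | succ i' =>
                rw [image_cons_le_succ, Finset.union_insert, ← Finset.insert_union]
                exact hwpre i'
          · rw [image_cons_univ, Finset.union_insert, ← Finset.insert_union]
            exact hwedge
        · exact (Fin.cons_right_injective (α := fun _ : Fin (m + 1) => V) u).injOn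
      have hsum : ∑ u ∈ C, (∏ j ∈ Finset.range m, (δ + j)) ≤
          ∑ u ∈ C, (G.filter fun f => f 0 = u).card :=
        Finset.sum_le_sum key1
      have hbiu : ∑ u ∈ C, (G.filter fun f => f 0 = u).card =
          (C.biUnion fun u => G.filter fun f => f 0 = u).card := by
        rw [Finset.card_biUnion]
        intro u hu u' hu' huu'
        simp only [Function.onFun]
        rw [Finset.disjoint_left]
        intro f hf hf'
        rw [mem_filter] at hf hf'
        exact huu' (hf.2 ▸ hf'.2 ▸ rfl)
      have hbsub : (C.biUnion fun u => G.filter fun f => f 0 = u) ⊆ G := by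
        intro f hf
        rw [Finset.mem_biUnion] at hf
        obtain ⟨u, -, hf⟩ := hf
        exact (mem_filter.mp hf).1
      calc ∏ j ∈ Finset.range (m + 1), (δ + j)
          = (∏ j ∈ Finset.range m, (δ + j)) * (δ + m) := Finset.prod_range_succ _ _
        _ ≤ (∏ j ∈ Finset.range m, (δ + j)) * C.card :=
            Nat.mul_le_mul_left _ hCcard
        _ = ∑ u ∈ C, (∏ j ∈ Finset.range m, (δ + j)) := by
            rw [Finset.sum_const, smul_eq_mul, mul_comm]
        _ ≤ ∑ u ∈ C, (G.filter fun f => f 0 = u).card := hsum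
        _ = (C.biUnion fun u => G.filter fun f => f 0 = u).card := hbiu
        _ ≤ G.card := Finset.card_le_card hbsub

open scoped Classical in
theorem stmt18 (k : ℕ) (H : Finset (Finset V)) (hunif : ∀ e ∈ H, e.card = k)
    (v : V) (hv : 0 < deg H {v}) :
    (∃ u : Fin (k - 1) → V,
      (∀ i : Fin (k - 1),
        0 < deg H (insert v ((univ.filter fun j => j ≤ i).image u))) ∧
      insert v (univ.image u) ∈ H) ∧
    Nat.factorial (minPosCodeg k H + k - 2) / Nat.factorial (minPosCodeg k H - 1) ≤
      ((univ : Finset (Fin (k - 1) → V)).filter fun u =>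
        (∀ i : Fin (k - 1),
          0 < deg H (insert v ((univ.filter fun j => j ≤ i).image u))) ∧
        insert v (univ.image u) ∈ H).card := by
  classical
  obtain ⟨e, he, hve⟩ := degPos_iff.mp hv
  have hek : e.card = k := hunif e he
  have hk1 : 1 ≤ k := by
    have : v ∈ e := hve (mem_singleton_self v)
    have := Finset.card_pos.mpr ⟨v, this⟩
    omega
  -- the minimum positive codegree is positive
  have hne : {d | ∃ S : Finset V, S.card = k - 1 ∧ 0 < deg H S ∧ deg H S = d}.Nonempty := by
    obtain ⟨T, hTe, hTcard⟩ := Finset.exists_subset_card_eq (s := e) (n := k - 1) (by omega)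
    exact ⟨deg H T, T, hTcard, degPos_iff.mpr ⟨e, he, hTe⟩, rfl⟩
  have hδpos : 0 < minPosCodeg k H := by
    obtain ⟨S, _, hSpos, hSd⟩ := Nat.sInf_mem hne
    rw [minPosCodeg, ← hSd] at *
    exact hSd ▸ hSpos
  set δ := minPosCodeg k H with hδdef
  -- apply the counting lemma with S = {v}
  have hmain := extB hunif (k - 1) {v} (by simp; omega) hv
  -- the two filters agree
  have hfilter : ((univ : Finset (Fin (k - 1) → V)).filter fun w =>
        (∀ i : Fin (k - 1), 0 < deg H ({v} ∪ ((univ.filter fun j => j ≤ i).image w))) ∧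
        {v} ∪ univ.image w ∈ H) =
      ((univ : Finset (Fin (k - 1) → V)).filter fun u =>
        (∀ i : Fin (k - 1),
          0 < deg H (insert v ((univ.filter fun j => j ≤ i).image u))) ∧
        insert v (univ.image u) ∈ H) := by
    apply Finset.filter_congr
    intro w _
    simp only [← Finset.insert_eq]
  rw [hfilter] at hmain
  have hprodpos : 0 < ∏ j ∈ Finset.range (k - 1), (δ + j) :=
    Finset.prod_pos fun j _ => by omega
  constructor
  · have : 0 < ((univ : Finset (Fin (k - 1) → V)).filter fun u =>
        (∀ i : Fin (k - 1),
          0 < deg H (insert v ((univ.filter fun j => j ≤ i).image u))) ∧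
        insert v (univ.image u) ∈ H).card := lt_of_lt_of_le hprodpos hmain
    obtain ⟨u, hu⟩ := Finset.card_pos.mp this
    exact ⟨u, (mem_filter.mp hu).2⟩
  · refine le_trans ?_ hmain
    have heq : δ + k - 2 = (δ - 1) + (k - 1) := by omega
    have hδ1 : δ - 1 + 1 = δ := by omega
    rw [heq, ← fact_mul_prod (δ - 1) (k - 1), hδ1,
      Nat.mul_div_cancel_left _ (Nat.factorial_pos _)]
end
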